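/- Let θ be irrational with continued fraction convergents m_i/n_i, and suppose n_{i+1} ≤ A·n_i for all i. Fix an odd index i with n = n_i ≥ 8, and C ≥ 1. Then there exists an n-irregular index j in the interval (Cn, (A²C+1)n]; in fact, if n' = n_{i'} is the convergent denominator with smallest even index i' > i satisfying n' > Cn, then j = n' + n is n-irregular, with γ(n') = 1 − 2i and γ(n + n') = 1 + 2i. -/
import Mathlib

open Complex

/-- The finite set Γ₀ = {-2, 2i, -2i, 1+2i, 1-2i}. -/
noncomputable def Gamma0 : Finset ℂ :=
  {-2, 2 * I, -2 * I, 1 + 2 * I, 1 - 2 * I}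

/-- γ(j) is the element of Γ₀ maximizing Re(γ·e^{2πijθ}). -/
def IsGammaSeq (θ : ℝ) (γ : ℕ → ℂ) : Prop :=
  ∀ j : ℕ, 1 ≤ j → γ j ∈ Gamma0 ∧
    ∀ γ' ∈ Gamma0, (γ' * Complex.exp (2 * Real.pi * θ * j * I)).re ≤
      (γ j * Complex.exp (2 * Real.pi * θ * j * I)).re

lemma max_plus (c s : ℝ) (hc : 0 < c) (hs : 0 < s) (g : ℂ) (hg : g ∈ Gamma0)
    (hmax : ∀ γ' ∈ Gamma0, (γ' * (↑c + ↑s * I)).re ≤ (g * (↑c + ↑s * I)).re) :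
    g = 1 - 2 * I := by
  have h := hmax (1 - 2*I) (by simp [Gamma0])
  simp only [Gamma0, Finset.mem_insert, Finset.mem_singleton] at hg
  have hre : ((1 - 2*I) * (↑c + ↑s * I)).re = c + 2*s := by
    simp [Complex.mul_re]
  rcases hg with h1|h1|h1|h1|h1 <;> subst h1
  · exfalso; simp [Complex.mul_re, hre] at h; linarith
  · exfalso; simp [Complex.mul_re, hre] at h; linarith
  · exfalso; simp [Complex.mul_re, hre] at h; linarith
  · exfalso; simp [Complex.mul_re, hre] at h; linarith
  · rfl

lemma max_minus (c s : ℝ) (hc : 0 < c) (hs : 0 < s) (g : ℂ) (hg : g ∈ Gamma0)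
    (hmax : ∀ γ' ∈ Gamma0, (γ' * (↑c - ↑s * I)).re ≤ (g * (↑c - ↑s * I)).re) :
    g = 1 + 2 * I := by
  have h := hmax (1 + 2*I) (by simp [Gamma0])
  simp only [Gamma0, Finset.mem_insert, Finset.mem_singleton] at hg
  have hre : ((1 + 2*I) * (↑c - ↑s * I)).re = c + 2*s := by
    simp [Complex.mul_re]
  rcases hg with h1|h1|h1|h1|h1 <;> subst h1
  · exfalso; simp [Complex.mul_re, hre] at h; linarith
  · exfalso; simp [Complex.mul_re, hre] at h; linarith
  · exfalso; simp [Complex.mul_re, hre] at h; linarith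
  · rfl
  · exfalso; simp [Complex.mul_re, hre] at h; linarith

lemma exp_reduce (x : ℝ) (k : ℤ) :
    Complex.exp (2 * (Real.pi : ℂ) * (((k : ℝ) : ℂ) + (x : ℂ)) * I) =
      ((Real.cos (2 * Real.pi * x) : ℝ) : ℂ) + ((Real.sin (2 * Real.pi * x) : ℝ) : ℂ) * I := by
  have harg : (2 * (Real.pi : ℂ) * (((k : ℝ) : ℂ) + (x : ℂ)) * I) =
      (k : ℂ) * (2 * (Real.pi : ℂ) * I) + ((2 * Real.pi * x : ℝ) : ℂ) * I := by
    push_cast; ring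
  rw [harg, Complex.exp_add, Complex.exp_int_mul_two_pi_mul_I, one_mul, Complex.exp_mul_I]
  simp [Complex.ofReal_cos, Complex.ofReal_sin]

lemma exp_reduce' (y : ℝ) (k : ℤ) :
    Complex.exp (2 * (Real.pi : ℂ) * (((k : ℝ) : ℂ) - (y : ℂ)) * I) =
      ((Real.cos (2 * Real.pi * y) : ℝ) : ℂ) - ((Real.sin (2 * Real.pi * y) : ℝ) : ℂ) * I := by
  have h := exp_reduce (-y) k
  rw [show (((-y : ℝ)) : ℂ) = -(y : ℂ) by push_cast; ring] at h
  rw [show 2 * Real.pi * (-y) = -(2 * Real.pi * y) by ring] at h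
  simpa [Real.cos_neg, Real.sin_neg, sub_eq_add_neg] using h

lemma cs_pos (x : ℝ) (hx0 : 0 < x) (hx8 : x < 1/8) :
    0 < Real.cos (2 * Real.pi * x) ∧ 0 < Real.sin (2 * Real.pi * x) := by
  have hπ := Real.pi_pos
  have h1 : 0 < 2 * Real.pi * x := by positivity
  have h2 : 2 * Real.pi * x < Real.pi / 2 := by nlinarith
  constructor
  · exact Real.cos_pos_of_mem_Ioo ⟨by linarith, h2⟩
  · exact Real.sin_pos_of_pos_of_lt_pi h1 (by linarith)

/-- For θ irrational with an odd-index convergent m/n (n ≥ 8) and the even-index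
convergent m'/n' with n' > Cn minimal, satisfying 0 < n'θ − m' < m − nθ < 1/n and
Cn < n' ≤ A²Cn, the index j = n' + n lies in (Cn, (A²C+1)n], is n-irregular, and
γ(n') = 1 − 2i, γ(n + n') = 1 + 2i. -/
theorem irregular_index_exists (θ : ℝ) (hθ : θ ∈ Set.Ioo (0 : ℝ) 1)
    (hirr : Irrational θ) (A C : ℝ) (hC : 1 ≤ C)
    (m m' : ℤ) (n n' : ℕ) (hn8 : 8 ≤ n) (hn' : 0 < n')
    (h1 : 0 < (n' : ℝ) * θ - m') (h2 : (n' : ℝ) * θ - m' < m - n * θ)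
    (h3 : (m : ℝ) - n * θ < 1 / n)
    (hlow : C * n < (n' : ℝ)) (hup : (n' : ℝ) ≤ A ^ 2 * C * n)
    (γ : ℕ → ℂ) (hγ : IsGammaSeq θ γ) :
    γ n' = 1 - 2 * I ∧ γ (n' + n) = 1 + 2 * I ∧
      C * n < ((n' + n : ℕ) : ℝ) ∧ ((n' + n : ℕ) : ℝ) ≤ (A ^ 2 * C + 1) * n ∧
      γ (n' + n) ≠ γ ((n' + n) - n) := by
  have hn0 : (0:ℝ) < n := by positivity
  have h8 : (1:ℝ)/n ≤ 1/8 := by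
    apply one_div_le_one_div_of_le (by norm_num)
    exact_mod_cast hn8
  set x : ℝ := (n' : ℝ) * θ - m' with hxdef
  set y : ℝ := ((m : ℝ) - n * θ) - x with hydef
  have hx0 : 0 < x := h1
  have hx8 : x < 1/8 := by calc x < (m:ℝ) - n*θ := h2
                                _ < 1/n := h3
                                _ ≤ 1/8 := h8
  have hy0 : 0 < y := by simp only [hydef]; linarith
  have hy8 : y < 1/8 := by simp only [hydef, hxdef]; linarith
  obtain ⟨hcx, hsx⟩ := cs_pos x hx0 hx8
  obtain ⟨hcy, hsy⟩ := cs_pos y hy0 hy8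
  -- γ n' = 1 - 2I
  obtain ⟨hmem1, hmax1⟩ := hγ n' hn'
  have e1 : Complex.exp (2 * (Real.pi:ℂ) * θ * (n' : ℕ) * I) =
      ((Real.cos (2*Real.pi*x) : ℝ) : ℂ) + ((Real.sin (2*Real.pi*x) : ℝ) : ℂ) * I := by
    rw [show (2 * (Real.pi:ℂ) * θ * (n' : ℕ) * I)
        = 2 * (Real.pi:ℂ) * (((m' : ℝ) : ℂ) + (x : ℂ)) * I by
      simp only [hxdef]; push_cast; ring]
    exact exp_reduce x m'
  rw [e1] at hmax1
  have hg1 : γ n' = 1 - 2 * I :=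
    max_plus _ _ hcx hsx _ hmem1 hmax1
  -- γ (n'+n) = 1 + 2I
  have hnn1 : 1 ≤ n' + n := by omega
  obtain ⟨hmem2, hmax2⟩ := hγ (n' + n) hnn1
  have e2 : Complex.exp (2 * (Real.pi:ℂ) * θ * ((n' + n : ℕ) : ℂ) * I) =
      ((Real.cos (2*Real.pi*y) : ℝ) : ℂ) - ((Real.sin (2*Real.pi*y) : ℝ) : ℂ) * I := by
    rw [show (2 * (Real.pi:ℂ) * θ * ((n' + n : ℕ) : ℂ) * I)
        = 2 * (Real.pi:ℂ) * ((((m + m' : ℤ) : ℝ) : ℂ) - (y : ℂ)) * I by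
      simp only [hydef, hxdef]; push_cast; ring]
    exact exp_reduce' y (m + m')
  rw [e2] at hmax2
  have hg2 : γ (n' + n) = 1 + 2 * I :=
    max_minus _ _ hcy hsy _ hmem2 hmax2
  refine ⟨hg1, hg2, ?_, ?_, ?_⟩
  · push_cast; linarith
  · have hr : (A^2*C+1) * (n:ℝ) = A^2*C*n + n := by ring
    push_cast; linarith
  · rw [Nat.add_sub_cancel, hg1, hg2]
    intro h
    have := congrArg Complex.im h
    norm_num at this
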